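/- arXiv:1910.10611 — 2 statements merged into one kernel-verified Lean document; each statement's English description precedes it below -/
import Mathlib

section
/- For all odd integers n and all integers m, L_n * L_{n+2m} = 5 * F_{n+m}^2 - L_m^2. -/
def lucasNat : ℕ → ℕ
  | 0 => 2
  | 1 => 1
  | (n + 2) => lucasNat (n + 1) + lucasNat n

noncomputable def F (n : ℤ) : ℤ :=
  if 0 ≤ n then Nat.fib n.toNat else (-1) ^ ((-n).toNat + 1) * Nat.fib (-n).toNat

noncomputable def L (n : ℤ) : ℤ :=
  if 0 ≤ n then lucasNat n.toNat else (-1) ^ (-n).toNat * lucasNat (-n).toNat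

lemma F_ofNat (j : ℕ) : F j = Nat.fib j := by
  simp [F]

lemma F_neg (j : ℕ) : F (-(j:ℤ)) = (-1)^(j+1) * Nat.fib j := by
  rcases Nat.eq_zero_or_pos j with h | h
  · subst h; simp [F]
  · have hj : ¬ (0:ℤ) ≤ -(j:ℤ) := by omega
    simp [F, hj]

lemma L_ofNat (j : ℕ) : L j = lucasNat j := by
  simp [L]

lemma L_neg (j : ℕ) : L (-(j:ℤ)) = (-1)^j * lucasNat j := by
  rcases Nat.eq_zero_or_pos j with h | h
  · subst h; simp [L, lucasNat]
  · have hj : ¬ (0:ℤ) ≤ -(j:ℤ) := by omega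
    simp [L, hj]
    exact fun h0 => absurd h0 h.ne'

lemma F_add_two (k : ℤ) : F (k+2) = F (k+1) + F k := by
  rcases le_or_gt 0 k with h | h
  · obtain ⟨j, rfl⟩ := Int.eq_ofNat_of_zero_le h
    rw [show ((j:ℤ)+2) = ((j+2:ℕ):ℤ) by push_cast; ring,
      show ((j:ℤ)+1) = ((j+1:ℕ):ℤ) by push_cast; ring,
      F_ofNat, F_ofNat, F_ofNat, Nat.fib_add_two]
    push_cast; ring
  · rcases eq_or_lt_of_le (by omega : k ≤ -1) with h1 | h1
    · subst h1
      rw [show ((-1:ℤ)+2) = ((1:ℕ):ℤ) by norm_num,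
        show ((-1:ℤ)+1) = ((0:ℕ):ℤ) by norm_num,
        show (-1:ℤ) = -((1:ℕ):ℤ) by norm_num,
        F_ofNat, F_ofNat, F_neg]
      norm_num
    · obtain ⟨j, hj⟩ : ∃ j : ℕ, k = -((j:ℤ)+2) := ⟨(-k-2).toNat, by omega⟩
      subst hj
      rw [show (-((j:ℤ)+2)+2) = -((j:ℕ):ℤ) by ring,
        show (-((j:ℤ)+2)+1) = -(((j+1:ℕ)):ℤ) by push_cast; ring,
        show (-((j:ℤ)+2)) = -(((j+2:ℕ)):ℤ) by push_cast; ring,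
        F_neg, F_neg, F_neg, Nat.fib_add_two]
      push_cast; ring

lemma L_add_two (k : ℤ) : L (k+2) = L (k+1) + L k := by
  rcases le_or_gt 0 k with h | h
  · obtain ⟨j, rfl⟩ := Int.eq_ofNat_of_zero_le h
    rw [show ((j:ℤ)+2) = ((j+2:ℕ):ℤ) by push_cast; ring,
      show ((j:ℤ)+1) = ((j+1:ℕ):ℤ) by push_cast; ring,
      L_ofNat, L_ofNat, L_ofNat,
      show lucasNat (j+2) = lucasNat (j+1) + lucasNat j from rfl]
    push_cast; ring
  · rcases eq_or_lt_of_le (by omega : k ≤ -1) with h1 | h1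
    · subst h1
      rw [show ((-1:ℤ)+2) = ((1:ℕ):ℤ) by norm_num,
        show ((-1:ℤ)+1) = ((0:ℕ):ℤ) by norm_num,
        show (-1:ℤ) = -((1:ℕ):ℤ) by norm_num,
        L_ofNat, L_ofNat, L_neg]
      simp [lucasNat]
    · obtain ⟨j, hj⟩ : ∃ j : ℕ, k = -((j:ℤ)+2) := ⟨(-k-2).toNat, by omega⟩
      subst hj
      rw [show (-((j:ℤ)+2)+2) = -((j:ℕ):ℤ) by ring,
        show (-((j:ℤ)+2)+1) = -(((j+1:ℕ)):ℤ) by push_cast; ring,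
        show (-((j:ℤ)+2)) = -(((j+2:ℕ)):ℤ) by push_cast; ring,
        L_neg, L_neg, L_neg,
        show lucasNat (j+2) = lucasNat (j+1) + lucasNat j from rfl]
      push_cast; ring

lemma two_sided (P : ℤ → Prop) (h0 : P 0) (h1 : P 1)
    (hup : ∀ k : ℤ, P k → P (k+1) → P (k+2))
    (hdown : ∀ k : ℤ, P (k+1) → P (k+2) → P k) : ∀ k, P k := by
  have key : ∀ k : ℤ, P k ∧ P (k+1) := by
    intro k
    induction k using Int.induction_on with
    | zero => exact ⟨h0, h1⟩
    | succ i ih => exact ⟨ih.2, hup i ih.1 ih.2⟩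
    | pred i ih =>
        refine ⟨hdown (-(i:ℤ)-1) ?_ ?_, ?_⟩
        · simpa [show (-(i:ℤ)-1+1) = -(i:ℤ) by ring] using ih.1
        · simpa [show (-(i:ℤ)-1+2) = -(i:ℤ)+1 by ring] using ih.2
        · simpa [show (-(i:ℤ)-1+1) = -(i:ℤ) by ring] using ih.1
  exact fun k => (key k).1

lemma F_zero : F 0 = 0 := by simp [F]
lemma F_one : F 1 = 1 := by simp [F]
lemma F_two : F 2 = 1 := by
  rw [show (2:ℤ) = ((2:ℕ):ℤ) by norm_num, F_ofNat]; decide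

lemma L_eq (k : ℤ) : L k = F (k-1) + F (k+1) := by
  induction k using two_sided with
  | h0 =>
      rw [show ((0:ℤ)-1) = -((1:ℕ):ℤ) by norm_num, F_neg,
        show ((0:ℤ)+1) = ((1:ℕ):ℤ) by norm_num, F_ofNat,
        show ((0:ℤ)) = ((0:ℕ):ℤ) by norm_num, L_ofNat]
      simp [lucasNat]
  | h1 =>
      rw [show ((1:ℤ)-1) = ((0:ℕ):ℤ) by norm_num, F_ofNat,
        show ((1:ℤ)+1) = ((2:ℕ):ℤ) by norm_num, F_ofNat,
        show ((1:ℤ)) = ((1:ℕ):ℤ) by norm_num, L_ofNat]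
      decide
  | hup k ih1 ih2 =>
      have hL := L_add_two k
      have hF1 := F_add_two (k-1)
      have hF2 := F_add_two (k+1)
      rw [show (k-1+2) = k+1 by ring, show (k-1+1) = k by ring] at hF1
      rw [show (k+1+2) = k+2+1 by ring] at hF2
      rw [show (k+1-1) = k by ring] at ih2
      rw [show (k+2-1) = k+1 by ring]
      linarith
  | hdown k ih1 ih2 =>
      have hL := L_add_two k
      have hF1 := F_add_two (k-1)
      have hF2 := F_add_two (k+1)
      rw [show (k-1+2) = k+1 by ring, show (k-1+1) = k by ring] at hF1
      rw [show (k+1-1) = k by ring] at ih1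
      rw [show (k+2-1) = k+1 by ring, show (k+2+1) = k+1+2 by ring] at ih2
      linarith

lemma F_add (a b : ℤ) : F (a+b+1) = F (a+1) * F (b+1) + F a * F b := by
  induction b using two_sided with
  | h0 => norm_num [F_zero, F_one]
  | h1 =>
      have h := F_add_two a
      rw [show (a+1+1:ℤ) = a+2 by ring, show ((1:ℤ)+1) = (2:ℤ) by norm_num, F_two, F_one]
      linarith
  | hup k ih1 ih2 =>
      have h2 := F_add_two k
      have h3 := F_add_two (k+1)
      have h4 := F_add_two (a+k+1)
      rw [show a+(k+2)+1 = a+k+1+2 by ring, show k+2+1 = k+1+2 by ring]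
      rw [show a+(k+1)+1 = a+k+1+1 by ring] at ih2
      linear_combination h4 + ih1 + ih2 - F (a+1) * h3 - F a * h2
  | hdown k ih1 ih2 =>
      have h2 := F_add_two k
      have h3 := F_add_two (k+1)
      have h4 := F_add_two (a+k+1)
      rw [show a+(k+2)+1 = a+k+1+2 by ring, show k+2+1 = k+1+2 by ring] at ih2
      rw [show a+(k+1)+1 = a+k+1+1 by ring] at ih1
      linear_combination ih2 - ih1 - h4 + F (a+1) * h3 + F a * h2

lemma cassini (k : ℤ) : F (k+1)^2 - F (k+1) * F k - F k^2 = if Even k then 1 else -1 := by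
  induction k using Int.induction_on with
  | zero => norm_num [F_zero, F_one]
  | succ i ih =>
      have h := F_add_two i
      rw [show ((i:ℤ)+1+1) = (i:ℤ)+2 by ring]
      have hpar : (if Even ((i:ℤ)+1) then (1:ℤ) else -1) = -(if Even (i:ℤ) then 1 else -1) := by
        rcases Int.even_or_odd (i:ℤ) with he | he
        · have : ¬ Even ((i:ℤ)+1) := by rcases he with ⟨r, hr⟩; rintro ⟨s, hs⟩; omega
          simp [this, he]
        · have h2 : ¬ Even (i:ℤ) := Int.not_even_iff_odd.2 he
          have h1 : Even ((i:ℤ)+1) := by rcases he with ⟨r, hr⟩; exact ⟨r+1, by omega⟩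
          simp [h1, h2]
      rw [hpar]
      linear_combination (F ((i:ℤ)+2) + F (i:ℤ)) * h - ih
  | pred i ih =>
      have h := F_add_two (-(i:ℤ)-1)
      rw [show (-(i:ℤ)-1+2) = -(i:ℤ)+1 by ring, show (-(i:ℤ)-1+1) = -(i:ℤ) by ring] at h
      rw [show (-(i:ℤ)-1+1) = -(i:ℤ) by ring]
      have hpar : (if Even (-(i:ℤ)-1) then (1:ℤ) else -1) = -(if Even (-(i:ℤ)) then 1 else -1) := by
        rcases Int.even_or_odd (-(i:ℤ)) with he | he
        · have : ¬ Even (-(i:ℤ)-1) := by rcases he with ⟨r, hr⟩; rintro ⟨s, hs⟩; omega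
          simp [this, he]
        · have h2 : ¬ Even (-(i:ℤ)) := Int.not_even_iff_odd.2 he
          have h1 : Even (-(i:ℤ)-1) := by rcases he with ⟨r, hr⟩; exact ⟨r, by omega⟩
          simp [h1, h2]
      rw [hpar]
      linear_combination (F (-(i:ℤ)+1) + F (-(i:ℤ)-1)) * h - ih

theorem stmt8 (n m : ℤ) (hn : Odd n) : L n * L (n + 2 * m) = 5 * F (n + m) ^ 2 - L m ^ 2 := by
  have hCn : F (n+1)^2 - F (n+1) * F n - F n^2 = -1 := by
    have h := cassini n
    rwa [if_neg (Int.not_even_iff_odd.2 hn)] at h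
  have hLgen : ∀ k : ℤ, L k = 2 * F (k+1) - F k := by
    intro k
    have h := L_eq k
    have h2 := F_add_two (k-1)
    rw [show (k-1+2) = k+1 by ring, show (k-1+1) = k by ring] at h2
    linarith
  have hLn : L n = 2 * F (n+1) - F n := hLgen n
  have hLm : L m = 2 * F (m+1) - F m := hLgen m
  have hL2 : L (n+2*m) = 2 * F (n+2*m+1) - F (n+2*m) := hLgen _
  have hF2m1 : F (2*m+1) = F (m+1)^2 + F m^2 := by
    have h := F_add m m
    rw [show (m+m+1) = 2*m+1 by ring] at h
    linear_combination h
  have hF2m : F (2*m) = F m * F (m+1) + (F (m+1) - F m) * F m := by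
    have h := F_add (m-1) m
    have h2 := F_add_two (m-1)
    rw [show (m-1+m+1) = 2*m by ring, show (m-1+1) = m by ring] at h
    rw [show (m-1+2) = m+1 by ring, show (m-1+1) = m by ring] at h2
    linear_combination h - F m * h2
  have hFn2m1 : F (n+2*m+1) = F (n+1) * F (2*m+1) + F n * F (2*m) := F_add n (2*m)
  have hFn2m : F (n+2*m) = F n * F (2*m+1) + (F (n+1) - F n) * F (2*m) := by
    have h := F_add (n-1) (2*m)
    have h2 := F_add_two (n-1)
    rw [show (n-1+2*m+1) = n+2*m by ring, show (n-1+1) = n by ring] at h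
    rw [show (n-1+2) = n+1 by ring, show (n-1+1) = n by ring] at h2
    linear_combination h - F (2*m) * h2
  have hFnm : F (n+m) = F n * F (m+1) + (F (n+1) - F n) * F m := by
    have h := F_add (n-1) m
    have h2 := F_add_two (n-1)
    rw [show (n-1+m+1) = n+m by ring, show (n-1+1) = n by ring] at h
    rw [show (n-1+2) = n+1 by ring, show (n-1+1) = n by ring] at h2
    linear_combination h - F m * h2
  rw [hLn, hL2, hLm, hFnm, hFn2m1, hFn2m, hF2m1, hF2m]
  linear_combination (2*F (m+1) - F m)^2 * hCn
end

section
/- For all positive integers m and n: arctan(2 / L_{2n-1}) = arctan(L_m / L_{2n+m-1}) + arctan(F_m / F_{2n+m-1}). -/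
/-!
By Binet's formulas `F_n = (φⁿ - ψⁿ) / √5` and `L_n = φⁿ + ψⁿ`, with `φψ = -1`, one gets, for odd `k`,
`L_m F_{m+k} + F_m L_{m+k} = 2 F_{2m+k}` and `F_{m+k} L_{m+k} - F_m L_m = F_{2m+2k} - F_{2m} = F_{2m+k} L_k`.
The second identity shows that the product of the two arguments on the right is below `1`, so the
addition formula for `arctan` applies, and the two identities together reduce the quotient it
produces to `2 / L_k`.
-/

open Real goldenRatio

theorem lucasNat_pos (n : ℕ) : 0 < lucasNat n := by
  induction n using lucasNat.induct with
  | case1 | case2 => simp [lucasNat]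
  | case3 n ih₁ _ => simp only [lucasNat]; omega

theorem coe_lucasNat_eq (n : ℕ) : (lucasNat n : ℝ) = φ ^ n + ψ ^ n := by
  induction n using Nat.twoStepInduction with
  | zero => simp [lucasNat]; norm_num
  | one => simp [lucasNat]
  | more n ih₀ ih₁ =>
    rw [lucasNat, Nat.cast_add, ih₁, ih₀]
    linear_combination (-φ ^ n) * goldenRatio_sq - ψ ^ n * goldenConj_sq

theorem coe_fib_mul_lucasNat (n : ℕ) : (Nat.fib n : ℝ) * lucasNat n = Nat.fib (2 * n) := by
  simp only [coe_fib_eq, coe_lucasNat_eq]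
  generalize φ = a; generalize ψ = b
  ring

theorem coe_lucasNat_mul_fib_add_fib_mul_lucasNat (m k : ℕ) :
    (lucasNat m : ℝ) * Nat.fib k + Nat.fib m * lucasNat k = 2 * Nat.fib (m + k) := by
  simp only [coe_fib_eq, coe_lucasNat_eq]
  generalize φ = a; generalize ψ = b
  ring

theorem coe_fib_add_two_mul_add_neg_one_pow_mul_fib (j k : ℕ) :
    (Nat.fib (j + 2 * k) : ℝ) + (-1) ^ k * Nat.fib j = Nat.fib (j + k) * lucasNat k := by
  simp only [coe_fib_eq, coe_lucasNat_eq, ← goldenRatio_mul_goldenConj]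
  generalize φ = a; generalize ψ = b
  ring

theorem arctan_lucasNat_div_add_arctan_fib_div {m k : ℕ} (hk : Odd k) :
    arctan ((lucasNat m : ℝ) / lucasNat (m + k)) + arctan ((Nat.fib m : ℝ) / Nat.fib (m + k)) =
      arctan (2 / lucasNat k) := by
  have hF : (0 : ℝ) < Nat.fib (m + k) := by exact_mod_cast Nat.fib_pos.2 (by grind)
  have hF' : (0 : ℝ) < Nat.fib (2 * m + k) := by exact_mod_cast Nat.fib_pos.2 (by grind)
  have hL : (0 : ℝ) < lucasNat (m + k) := by exact_mod_cast lucasNat_pos _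
  have hLk : (0 : ℝ) < lucasNat k := by exact_mod_cast lucasNat_pos _
  have hdiff : (Nat.fib (m + k) : ℝ) * lucasNat (m + k) - Nat.fib m * lucasNat m =
      Nat.fib (2 * m + k) * lucasNat k := by
    have := coe_fib_add_two_mul_add_neg_one_pow_mul_fib (2 * m) k
    rw [hk.neg_one_pow] at this
    rw [coe_fib_mul_lucasNat, coe_fib_mul_lucasNat, mul_add, ← this]
    ring
  have hsum : (lucasNat m : ℝ) * Nat.fib (m + k) + Nat.fib m * lucasNat (m + k) =
      2 * Nat.fib (2 * m + k) := by
    rw [coe_lucasNat_mul_fib_add_fib_mul_lucasNat, ← add_assoc, ← two_mul]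
  have hlt : (lucasNat m : ℝ) / lucasNat (m + k) * (Nat.fib m / Nat.fib (m + k)) < 1 := by
    rw [div_mul_div_comm, div_lt_one (by positivity)]
    linarith [mul_pos hF' hLk]
  rw [arctan_add hlt]
  congr 1
  rw [div_eq_div_iff (sub_pos.2 hlt).ne' hLk.ne']
  field_simp
  linear_combination (lucasNat k : ℝ) * hsum - 2 * hdiff

theorem stmt16_general (m n : ℕ) (hn : 0 < n) :
    Real.arctan (2 / (lucasNat (2 * n - 1) : ℝ)) =
      Real.arctan ((lucasNat m : ℝ) / lucasNat (2 * n + m - 1)) +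
        Real.arctan ((Nat.fib m : ℝ) / Nat.fib (2 * n + m - 1)) := by
  rw [show 2 * n + m - 1 = m + (2 * n - 1) by omega,
    arctan_lucasNat_div_add_arctan_fib_div ⟨n - 1, by omega⟩]

theorem stmt16 (m n : ℕ) (hm : 0 < m) (hn : 0 < n) :
    Real.arctan (2 / (lucasNat (2 * n - 1) : ℝ)) =
      Real.arctan ((lucasNat m : ℝ) / lucasNat (2 * n + m - 1)) +
        Real.arctan ((Nat.fib m : ℝ) / Nat.fib (2 * n + m - 1)) :=
  stmt16_general m n hn
end
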